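/- arXiv:2602.10774 — 3 statements merged into one kernel-verified Lean document; each statement's English description precedes it below -/
import Mathlib

section
/- For every real number a ∈ (0,1) and all x, y > 0, x^{−a} + y^{−a} < 2·(x^{−1} + y^{−1})^{a}. -/
theorem stmt3 (a x y : ℝ) (ha : a ∈ Set.Ioo (0:ℝ) 1) (hx : 0 < x) (hy : 0 < y) :
    x ^ (-a) + y ^ (-a) < 2 * (x⁻¹ + y⁻¹) ^ a := by
  obtain ⟨ha0, ha1⟩ := ha
  have hx' : (0:ℝ) < x⁻¹ := inv_pos.mpr hx
  have hy' : (0:ℝ) < y⁻¹ := inv_pos.mpr hy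
  have h1 : x ^ (-a) = (x⁻¹) ^ a := by
    rw [Real.rpow_neg hx.le, ← Real.inv_rpow hx.le]
  have h2 : y ^ (-a) = (y⁻¹) ^ a := by
    rw [Real.rpow_neg hy.le, ← Real.inv_rpow hy.le]
  have hxl : (x⁻¹) ^ a < (x⁻¹ + y⁻¹) ^ a :=
    Real.rpow_lt_rpow hx'.le (by linarith) ha0
  have hyl : (y⁻¹) ^ a < (x⁻¹ + y⁻¹) ^ a :=
    Real.rpow_lt_rpow hy'.le (by linarith) ha0
  rw [h1, h2]
  linarith
end

section
/- Let q ≥ 1 be an integer and h > 0. For eigenvalues λ_t = 1/(1 + (c_t π h t)^{2q}) with c_t ∈ [2^{1−1/(2q)}, 2], there exists a constant C depending only on q such that 2·∑_{t=1}^{⌊N/2⌋} λ_t⁴ + 1 ≤ C/h + 2, for all N with hN ≥ 1. -/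
open Real

lemma arctan_sub_ge (a b : ℝ) (ha : 0 ≤ a) (hab : a ≤ b) :
    (b - a) / (1 + b ^ 2) ≤ Real.arctan b - Real.arctan a := by
  have hg : AntitoneOn (fun x => x / (1 + b ^ 2) - Real.arctan x) (Set.Icc a b) := by
    have hd : ∀ x : ℝ, HasDerivAt (fun x => x / (1 + b ^ 2) - Real.arctan x)
        (1 / (1 + b ^ 2) - 1 / (1 + x ^ 2)) x := by
      intro x
      have h1 : HasDerivAt (fun x : ℝ => x / (1 + b ^ 2)) (1 / (1 + b ^ 2)) x := by
        simpa using (hasDerivAt_id x).div_const (1 + b ^ 2)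
      exact h1.sub (Real.hasDerivAt_arctan x)
    apply antitoneOn_of_deriv_nonpos (convex_Icc a b)
    · exact (Continuous.continuousOn (by continuity))
    · intro x hx
      exact (hd x).differentiableAt.differentiableWithinAt
    · intro x hx
      rw [interior_Icc] at hx
      rw [(hd x).deriv]
      have hx2 : x ^ 2 ≤ b ^ 2 := by nlinarith [hx.1, hx.2]
      have h1 : (0:ℝ) < 1 + x ^ 2 := by positivity
      have : 1 / (1 + b ^ 2) ≤ 1 / (1 + x ^ 2) := by
        apply one_div_le_one_div_of_le h1; linarith
      linarith
  have key := hg (Set.left_mem_Icc.2 hab) (Set.right_mem_Icc.2 hab) hab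
  simp only at key
  rw [sub_div]
  linarith

theorem stmt8 (q : ℕ) (hq : 1 ≤ q) :
    ∃ C : ℝ, 0 < C ∧ ∀ (h : ℝ), 0 < h → ∀ (N : ℕ), 1 ≤ h * N →
      ∀ c : ℕ → ℝ, (∀ t, c t ∈ Set.Icc ((2:ℝ) ^ (1 - 1 / (2 * (q:ℝ)))) 2) →
        2 * (∑ t ∈ Finset.Icc 1 (N / 2),
            (1 / (1 + (c t * π * h * t) ^ (2 * q))) ^ 4) + 1
          ≤ C / h + 2 := by
  refine ⟨2, by norm_num, ?_⟩
  intro h hh N _ c hc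
  have hπ : (0:ℝ) < π := Real.pi_pos
  have hπh : (0:ℝ) < π * h := by positivity
  set M := N / 2 with hM
  -- reindex sum from Icc 1 M to range M
  have hreindex : ∑ t ∈ Finset.Icc 1 M,
      (1 / (1 + (c t * π * h * t) ^ (2 * q))) ^ 4
      = ∑ i ∈ Finset.range M,
        (1 / (1 + (c (1 + i) * π * h * (1 + i : ℕ)) ^ (2 * q))) ^ 4 := by
    rw [← Finset.Ico_add_one_right_eq_Icc, Finset.sum_Ico_eq_sum_range]
    simp
  -- termwise bound
  have hterm : ∀ i ∈ Finset.range M,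
      (1 / (1 + (c (1 + i) * π * h * (1 + i : ℕ)) ^ (2 * q))) ^ 4
      ≤ (2 / (π * h)) * (Real.arctan (π * h * (i + 1)) - Real.arctan (π * h * i)) := by
    intro i _
    set ct := c (1 + i) with hct
    have hct1 : 1 ≤ ct := by
      have := (hc (1 + i)).1
      have hx : (0:ℝ) ≤ 1 - 1 / (2 * (q:ℝ)) := by
        have hq' : (1:ℝ) ≤ (q:ℝ) := by exact_mod_cast hq
        have : 1 / (2 * (q:ℝ)) ≤ 1 / 2 := by
          apply one_div_le_one_div_of_le <;> linarith
        linarith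
      calc (1:ℝ) = (2:ℝ) ^ (0:ℝ) := by norm_num
        _ ≤ (2:ℝ) ^ (1 - 1 / (2 * (q:ℝ))) := by
            apply Real.rpow_le_rpow_of_exponent_le (by norm_num) hx
        _ ≤ ct := this
    set b := π * h * ((i:ℝ) + 1) with hb
    set a := π * h * (i:ℝ) with ha
    have hb0 : 0 < b := by positivity
    have ha0 : 0 ≤ a := by positivity
    have hab : a ≤ b := by
      apply mul_le_mul_of_nonneg_left (by linarith) (le_of_lt hπh)
    have hid : ct * π * h * ((1 + i : ℕ) : ℝ) = ct * b := by
      push_cast; ring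
    -- λ = 1/(1 + (ct*b)^(2q)), 0 ≤ λ ≤ 1
    have hxnn : (0:ℝ) ≤ (ct * b) ^ (2 * q) := by positivity
    have hden : (0:ℝ) < 1 + (ct * b) ^ (2 * q) := by linarith
    have hlam0 : (0:ℝ) ≤ 1 / (1 + (ct * b) ^ (2 * q)) := by positivity
    have hlam1 : 1 / (1 + (ct * b) ^ (2 * q)) ≤ 1 := by
      rw [div_le_one hden]; linarith
    have hpow : (1 / (1 + (ct * b) ^ (2 * q))) ^ 4 ≤ 1 / (1 + (ct * b) ^ (2 * q)) :=
      pow_le_of_le_one hlam0 hlam1 (by norm_num)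
    -- Claim A: λ ≤ 2/(1+b²)
    have hb2 : (0:ℝ) < 1 + b ^ 2 := by positivity
    have hA : 1 / (1 + (ct * b) ^ (2 * q)) ≤ 2 / (1 + b ^ 2) := by
      rcases le_or_gt b 1 with hb1 | hb1
      · have : 1 + b ^ 2 ≤ 2 := by nlinarith
        calc 1 / (1 + (ct * b) ^ (2 * q)) ≤ 1 := hlam1
          _ = 2 / 2 := by norm_num
          _ ≤ 2 / (1 + b ^ 2) := by
              apply div_le_div_of_nonneg_left (by norm_num) hb2 this
      · have hub : b ≤ ct * b := by nlinarith
        have h1b : (1:ℝ) ≤ b := le_of_lt hb1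
        have hb2q : b ^ 2 ≤ (ct * b) ^ (2 * q) := by
          calc b ^ 2 ≤ b ^ (2 * q) := by
                apply pow_le_pow_right₀ h1b; omega
            _ ≤ (ct * b) ^ (2 * q) := by
                apply pow_le_pow_left₀ (le_of_lt hb0) hub
        calc 1 / (1 + (ct * b) ^ (2 * q)) ≤ 1 / (1 + b ^ 2) := by
              apply one_div_le_one_div_of_le hb2; linarith
          _ ≤ 2 / (1 + b ^ 2) := by
              gcongr
              norm_num
    -- Claim B: 2/(1+b²) ≤ (2/(πh)) (arctan b - arctan a)
    have hB : 2 / (1 + b ^ 2) ≤ (2 / (π * h)) * (Real.arctan b - Real.arctan a) := by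
      have harc := arctan_sub_ge a b ha0 hab
      have hba : b - a = π * h := by rw [hb, ha]; ring
      rw [hba] at harc
      have h2 : 2 / (1 + b ^ 2) = 2 / (π * h) * (π * h / (1 + b ^ 2)) := by
        field_simp
      rw [h2]
      apply mul_le_mul_of_nonneg_left harc (by positivity)
    rw [hid]
    exact hpow.trans (hA.trans hB)
  -- telescoping
  have hsum : ∑ i ∈ Finset.range M,
      (2 / (π * h)) * (Real.arctan (π * h * (i + 1)) - Real.arctan (π * h * i))
      = (2 / (π * h)) * Real.arctan (π * h * M) := by
    rw [← Finset.mul_sum]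
    congr 1
    have := Finset.sum_range_sub (fun i : ℕ => Real.arctan (π * h * i)) M
    simp only [Nat.cast_zero, mul_zero, Real.arctan_zero, sub_zero] at this
    rw [← this]
    apply Finset.sum_congr rfl
    intro i _
    push_cast
    ring
  have hS : ∑ t ∈ Finset.Icc 1 M, (1 / (1 + (c t * π * h * t) ^ (2 * q))) ^ 4
      ≤ 1 / h := by
    rw [hreindex]
    calc ∑ i ∈ Finset.range M,
          (1 / (1 + (c (1 + i) * π * h * (1 + i : ℕ)) ^ (2 * q))) ^ 4
        ≤ ∑ i ∈ Finset.range M,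
          (2 / (π * h)) * (Real.arctan (π * h * (i + 1)) - Real.arctan (π * h * i)) :=
          Finset.sum_le_sum hterm
      _ = (2 / (π * h)) * Real.arctan (π * h * M) := hsum
      _ ≤ (2 / (π * h)) * (π / 2) := by
          apply mul_le_mul_of_nonneg_left (le_of_lt (Real.arctan_lt_pi_div_two _))
          positivity
      _ = 1 / h := by
          field_simp
  have h1h : (0:ℝ) < 1 / h := by positivity
  calc 2 * (∑ t ∈ Finset.Icc 1 M, (1 / (1 + (c t * π * h * t) ^ (2 * q))) ^ 4) + 1
      ≤ 2 * (1 / h) + 1 := by linarith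
    _ ≤ 2 / h + 2 := by rw [mul_one_div]; linarith
end

section
/- Let η > 1/2, q ≥ 1 an integer with η ≤ 2q, and h ∈ (0,1). Suppose (g_t)_{t≥1} are reals with |g_t| ≤ t^{−η} for all t, and c_t ∈ [2^{1−1/(2q)}, 2]. Then there is a constant C = C(η, q) such that for all N, (1/N)·∑_{t=1}^{N} [((c_t π h t)^{2q}/(1 + (c_t π h t)^{2q}))² · g_t²] ≤ C·h^{2η}. -/
open Real

lemma per_term9 (η : ℝ) (q : ℕ) (hη0 : 0 < η) (hη2 : η ≤ 2 * q)
    (h t x g : ℝ) (h0 : 0 < h) (ht : 1 ≤ t)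
    (hx0 : 0 < x) (hx2 : x ≤ 2 * π * h * t) (hg : |g| ≤ t ^ (-η)) :
    (x ^ (2*q) / (1 + x ^ (2*q))) ^ 2 * g ^ 2 ≤ (2*π) ^ (2*η) * h ^ (2*η) := by
  have htpos : (0:ℝ) < t := lt_of_lt_of_le one_pos ht
  have hπ : (0:ℝ) < π := Real.pi_pos
  have hxq0 : (0:ℝ) ≤ x ^ (2*q) := pow_nonneg hx0.le _
  have hden : (1:ℝ) ≤ 1 + x ^ (2*q) := by linarith
  have hr0 : (0:ℝ) ≤ x ^ (2*q) / (1 + x ^ (2*q)) := div_nonneg hxq0 (by linarith)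
  have hg2 : g ^ 2 ≤ (t ^ (-η)) ^ 2 := by
    rw [← sq_abs]
    exact pow_le_pow_left₀ (abs_nonneg g) hg 2
  have hg2' : (t ^ (-η)) ^ 2 = t ^ (-(2*η)) := by
    rw [← Real.rpow_natCast (t ^ (-η)) 2, ← Real.rpow_mul htpos.le]
    norm_num
    ring_nf
  have htneg : (0:ℝ) ≤ t ^ (-(2*η)) := Real.rpow_nonneg htpos.le _
  by_cases hc : 2 * π * h * t ≤ 1
  · -- small x case
    have hx1 : x ≤ 1 := le_trans hx2 hc
    have hr : x ^ (2*q) / (1 + x ^ (2*q)) ≤ x ^ (2*q) := div_le_self hxq0 hden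
    have hsq : (x ^ (2*q) / (1 + x ^ (2*q))) ^ 2 ≤ x ^ (4*q) := by
      calc (x ^ (2*q) / (1 + x ^ (2*q))) ^ 2 ≤ (x ^ (2*q)) ^ 2 :=
            pow_le_pow_left₀ hr0 hr 2
        _ = x ^ (4*q) := by rw [← pow_mul]; ring_nf
    have h4q : x ^ (4*q) ≤ x ^ (2*η) := by
      rw [← Real.rpow_natCast x (4*q)]
      apply Real.rpow_le_rpow_of_exponent_ge hx0 hx1
      push_cast
      linarith
    have hxx : x ^ (2*η) ≤ (2*π*h*t) ^ (2*η) :=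
      Real.rpow_le_rpow hx0.le hx2 (by linarith)
    have hsplit : (2*π*h*t) ^ (2*η) = (2*π) ^ (2*η) * h ^ (2*η) * t ^ (2*η) := by
      rw [Real.mul_rpow (by positivity) htpos.le, Real.mul_rpow (by positivity) h0.le]
    have htt : t ^ (2*η) * t ^ (-(2*η)) = 1 := by
      rw [← Real.rpow_add htpos]; simp
    calc (x ^ (2*q) / (1 + x ^ (2*q))) ^ 2 * g ^ 2
        ≤ x ^ (4*q) * t ^ (-(2*η)) := by
          apply mul_le_mul hsq (by rw [← hg2']; exact hg2) (by positivity) (by positivity)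
      _ ≤ (2*π*h*t) ^ (2*η) * t ^ (-(2*η)) := by
          apply mul_le_mul_of_nonneg_right (le_trans h4q hxx) htneg
      _ = (2*π) ^ (2*η) * h ^ (2*η) := by
          rw [hsplit, mul_assoc, htt, mul_one]
  · -- large x case
    push_neg at hc
    have hr1 : x ^ (2*q) / (1 + x ^ (2*q)) ≤ 1 := by
      rw [div_le_one (by linarith)]; linarith
    have hsq : (x ^ (2*q) / (1 + x ^ (2*q))) ^ 2 ≤ 1 := by
      calc (x ^ (2*q) / (1 + x ^ (2*q))) ^ 2 ≤ 1 ^ 2 := pow_le_pow_left₀ hr0 hr1 2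
        _ = 1 := one_pow 2
    have hinv : t⁻¹ ≤ 2 * π * h := by
      rw [inv_eq_one_div, div_le_iff₀ htpos]
      linarith
    have htle : t ^ (-(2*η)) ≤ (2*π*h) ^ (2*η) := by
      have h1 : t ^ (-(2*η)) = (t⁻¹) ^ (2*η) := by
        rw [Real.inv_rpow htpos.le, ← Real.rpow_neg htpos.le]
      rw [h1]
      exact Real.rpow_le_rpow (by positivity) hinv (by linarith)
    have hsplit : (2*π*h) ^ (2*η) = (2*π) ^ (2*η) * h ^ (2*η) :=
      Real.mul_rpow (by positivity) h0.le
    calc (x ^ (2*q) / (1 + x ^ (2*q))) ^ 2 * g ^ 2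
        ≤ 1 * t ^ (-(2*η)) := by
          apply mul_le_mul hsq (by rw [← hg2']; exact hg2) (by positivity) zero_le_one
      _ = t ^ (-(2*η)) := one_mul _
      _ ≤ (2*π) ^ (2*η) * h ^ (2*η) := by rw [← hsplit]; exact htle

theorem stmt9 (η : ℝ) (q : ℕ) (hq : 1 ≤ q) (hη : 1/2 < η) (hη2 : η ≤ 2 * q) :
    ∃ C : ℝ, 0 < C ∧ ∀ (h : ℝ), h ∈ Set.Ioo (0:ℝ) 1 →
      ∀ (g c : ℕ → ℝ), (∀ t : ℕ, 0 < t → |g t| ≤ (t:ℝ) ^ (-η)) →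
        (∀ t, c t ∈ Set.Icc ((2:ℝ) ^ (1 - 1 / (2 * (q:ℝ)))) 2) →
        ∀ N : ℕ, 0 < N →
          (1 / (N:ℝ)) * ∑ t ∈ Finset.Icc 1 N,
              (((c t * π * h * t) ^ (2 * q) / (1 + (c t * π * h * t) ^ (2 * q))) ^ 2
                * g t ^ 2)
            ≤ C * h ^ (2 * η) := by
  have hπ : (0:ℝ) < π := Real.pi_pos
  refine ⟨(2*π) ^ (2*η), by positivity, ?_⟩
  intro h hh g c hg hc N hN
  obtain ⟨h0, h1⟩ := hh
  have hη0 : 0 < η := by linarith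
  have hbound : ∀ t ∈ Finset.Icc 1 N,
      ((c t * π * h * t) ^ (2 * q) / (1 + (c t * π * h * t) ^ (2 * q))) ^ 2 * g t ^ 2
        ≤ (2*π) ^ (2*η) * h ^ (2*η) := by
    intro t htmem
    rw [Finset.mem_Icc] at htmem
    have ht1 : (1:ℝ) ≤ (t:ℝ) := by exact_mod_cast htmem.1
    have hct := hc t
    rw [Set.mem_Icc] at hct
    have hcpos : (0:ℝ) < c t := by
      have : (0:ℝ) < (2:ℝ) ^ (1 - 1 / (2 * (q:ℝ))) := Real.rpow_pos_of_pos two_pos _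
      linarith [hct.1]
    have hx0 : 0 < c t * π * h * (t:ℝ) := by positivity
    have hx2 : c t * π * h * (t:ℝ) ≤ 2 * π * h * (t:ℝ) := by
      have := hct.2
      have hpt : (0:ℝ) < π * h * (t:ℝ) := by positivity
      nlinarith
    exact per_term9 η q hη0 hη2 h (t:ℝ) _ (g t) h0 ht1 hx0 hx2 (hg t htmem.1)
  have hsum : ∑ t ∈ Finset.Icc 1 N,
      ((c t * π * h * t) ^ (2 * q) / (1 + (c t * π * h * t) ^ (2 * q))) ^ 2 * g t ^ 2
      ≤ (N:ℝ) * ((2*π) ^ (2*η) * h ^ (2*η)) := by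
    have := Finset.sum_le_card_nsmul (Finset.Icc 1 N)
      (fun t => ((c t * π * h * t) ^ (2 * q) / (1 + (c t * π * h * t) ^ (2 * q))) ^ 2 * g t ^ 2)
      ((2*π) ^ (2*η) * h ^ (2*η)) hbound
    simpa [Nat.card_Icc, nsmul_eq_mul] using this
  have hNpos : (0:ℝ) < (N:ℝ) := by exact_mod_cast hN
  rw [one_div, inv_mul_le_iff₀ hNpos]
  exact hsum
end
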